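/- For every q ∈ C with 0 < |q| < 1 the theta constants satisfy Jacobi's identity θ_3(0,q)^4 = θ_2(0,q)^4 + θ_4(0,q)^4. -/

import Mathlib

/-- The theta constant `θ₂(0,q) = Σ_{n∈ℤ} q^{(n+1/2)²}`, where half-integer powers of `q`
are taken with the principal branch of the complex logarithm. -/
noncomputable def thetaTwo (q : ℂ) : ℂ := ∑' n : ℤ, q ^ (((n : ℂ) + 1 / 2) ^ 2)

/-- The theta constant `θ₃(0,q) = Σ_{n∈ℤ} q^{n²}`. -/
noncomputable def thetaThree (q : ℂ) : ℂ := ∑' n : ℤ, q ^ (n ^ 2)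

/-- The theta constant `θ₄(0,q) = Σ_{n∈ℤ} (-1)^n q^{n²}`. -/
noncomputable def thetaFour (q : ℂ) : ℂ := ∑' n : ℤ, (-1 : ℂ) ^ n * q ^ (n ^ 2)

/-!
Expanding the fourth powers as sums over `ℤ⁴` gives
`θ₃⁴ - θ₄⁴ = 2 ∑_{∑ xᵢ odd} q^{|x|²}` and, after pulling out `q^{1/4}` from each factor of `θ₂`,
`θ₂⁴ = ∑_x q^{|x + ½|²}` with integer exponents `|x + ½|² = |x|² + ∑ xᵢ + 1`.
The reflection `x₄ ↦ -1 - x₄` fixes `|x + ½|²` and swaps the parity of `∑ xᵢ`, so `θ₂⁴` is twice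
the sum over `∑ xᵢ` even; a Hadamard rotation maps `{∑ xᵢ even}` bijectively onto `{∑ xᵢ odd}`,
carrying `|x + ½|²` to `|z|²`.
-/

local notation "ℤ⁴" => (ℤ × ℤ) × ℤ × ℤ

theorem hasSum_pow_four_of_summable_norm {ι R : Type*} [NormedCommRing R] [CompleteSpace R]
    {f : ι → R} (hf : Summable fun n => ‖f n‖) :
    HasSum (fun p : (ι × ι) × ι × ι => f p.1.1 * f p.1.2 * (f p.2.1 * f p.2.2))
      ((∑' n, f n) ^ 4) := by
  have hf2 := hf.mul_norm hf
  rw [show (∑' n, f n) ^ 4 = ((∑' n, f n) * ∑' n, f n) * ((∑' n, f n) * ∑' n, f n) by ring,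
    tsum_mul_tsum_of_summable_norm hf hf, tsum_mul_tsum_of_summable_norm hf2 hf2]
  exact (hf2.mul_norm hf2).of_norm.hasSum

theorem summable_zpow_of_abs_le {r : ℝ} (hr0 : 0 < r) (hr1 : r < 1) {e : ℤ → ℤ} (c : ℤ)
    (he : ∀ n, |n| ≤ e n + c) : Summable fun n => r ^ e n := by
  have hgeom : Summable fun n : ℤ => r ^ |n| := by
    refine .of_nat_of_neg ?_ ?_ <;> simpa using summable_geometric_of_lt_one hr0.le hr1
  refine (hgeom.mul_left (r ^ (-c))).of_nonneg_of_le (fun n => by positivity) fun n => ?_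
  rw [← zpow_add₀ hr0.ne']
  exact zpow_le_zpow_right_of_le_one₀ hr0 hr1.le (by linarith [he n])

theorem summable_norm_zpow_of_abs_le {q : ℂ} (h0 : 0 < ‖q‖) (h1 : ‖q‖ < 1) {e : ℤ → ℤ} (c : ℤ)
    (he : ∀ n, |n| ≤ e n + c) : Summable fun n => ‖q ^ e n‖ := by
  simpa only [norm_zpow] using summable_zpow_of_abs_le h0 h1 c he

theorem abs_le_sq_add_one (n : ℤ) : |n| ≤ n ^ 2 + 1 :=
  abs_le.2 ⟨by nlinarith [sq_nonneg (n + 1)], by nlinarith [sq_nonneg (n - 1)]⟩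

theorem abs_le_sq_add_self_add_one (n : ℤ) : |n| ≤ n ^ 2 + n + 1 :=
  abs_le.2 ⟨by nlinarith [sq_nonneg (n + 1)], by nlinarith [sq_nonneg n]⟩

theorem tsum_sub_tsum_neg_one_zpow_mul {α 𝕜 : Type*} [NormedField 𝕜] [CompleteSpace 𝕜]
    {s : α → ℤ} {F : α → 𝕜} (hF : Summable F) (hF' : Summable fun a => (-1) ^ s a * F a) :
    ∑' a, F a - ∑' a, (-1) ^ s a * F a = 2 * ∑' a : {a // Odd (s a)}, F a := by
  rw [← hF.tsum_sub hF', ← (hF.sub hF').tsum_subtype_add_tsum_subtype_compl {a | Odd (s a)}]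
  have hodd : ∀ a : ↥{a | Odd (s a)}, F a - (-1) ^ s a * F a = 2 * F a := fun ⟨a, ha⟩ => by
    rw [ha.neg_one_zpow]; ring
  have hcompl : ∀ a : ↥{a | Odd (s a)}ᶜ, F a - (-1) ^ s a * F a = 0 := fun ⟨a, ha⟩ => by
    rw [(Int.not_odd_iff_even.mp ha).neg_one_zpow, one_mul, sub_self]
  rw [tsum_congr hodd, tsum_congr hcompl, tsum_zero, add_zero, tsum_mul_left]
  rfl

theorem tsum_eq_two_mul_tsum_subtype_of_equiv {α R : Type*} [NormedRing R] [CompleteSpace R]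
    {P : α → Prop} {G : α → R} (hG : Summable G) (e : α ≃ α) (heP : ∀ a, P a ↔ ¬ P (e a))
    (hGe : ∀ a, G (e a) = G a) : ∑' a, G a = 2 * ∑' a : {a // P a}, G a := by
  rw [← hG.tsum_subtype_add_tsum_subtype_compl {a | P a}, two_mul]
  congr 1
  rw [← (e.subtypeEquiv heP).tsum_eq]
  exact tsum_congr fun a => hGe a

def coordSum (p : ℤ⁴) : ℤ := p.1.1 + p.1.2 + p.2.1 + p.2.2

def sqNorm (p : ℤ⁴) : ℤ := p.1.1 ^ 2 + p.1.2 ^ 2 + p.2.1 ^ 2 + p.2.2 ^ 2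

def reflectLast : ℤ⁴ ≃ ℤ⁴ :=
  (Equiv.refl _).prodCongr ((Equiv.refl _).prodCongr (Equiv.subLeft (-1)))

theorem sqNorm_add_coordSum_reflectLast (p : ℤ⁴) :
    sqNorm (reflectLast p) + coordSum (reflectLast p) = sqNorm p + coordSum p := by
  simp only [reflectLast, sqNorm, coordSum, Equiv.prodCongr_apply, Equiv.coe_refl, Prod.map,
    id, Equiv.subLeft_apply]
  ring

theorem even_coordSum_iff_not_even_reflectLast (p : ℤ⁴) :
    Even (coordSum p) ↔ ¬ Even (coordSum (reflectLast p)) := by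
  obtain ⟨⟨a, b⟩, c, d⟩ := p
  simp only [reflectLast, coordSum, Equiv.prodCongr_apply, Equiv.coe_refl, Prod.map,
    id, Equiv.subLeft_apply, Int.even_iff]
  constructor <;> intro h <;> omega

/- Writing `y = 2p + (1, 1, 1, 1)`, this is `z = H y / 2` for the orthogonal Hadamard matrix
`H = ½ [[1, 1, 1, 1], [1, 1, -1, -1], [1, -1, 1, -1], [1, -1, -1, 1]]`; the coordinates of `H y`
all have the parity of `coordSum p`, and `|z|² = |y|² / 4 = |p + ½|²`. -/
def toOddSum (p : ℤ⁴) : ℤ⁴ :=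
  let m := coordSum p / 2
  ((m + 1, m - p.2.1 - p.2.2), (m - p.1.2 - p.2.2, m - p.1.2 - p.2.1))

def ofOddSum (z : ℤ⁴) : ℤ⁴ :=
  let k := coordSum z / 2
  ((k, k - z.2.1 - z.2.2), (k - z.1.2 - z.2.2, k - z.1.2 - z.2.1))

def evenSumEquivOddSum : {p : ℤ⁴ // Even (coordSum p)} ≃ {z : ℤ⁴ // Odd (coordSum z)} where
  toFun p := ⟨toOddSum p, by
    obtain ⟨p, h⟩ := p
    simp only [toOddSum, coordSum, Int.even_iff, Int.odd_iff] at h ⊢; omega⟩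
  invFun z := ⟨ofOddSum z, by
    obtain ⟨z, h⟩ := z
    simp only [ofOddSum, coordSum, Int.even_iff, Int.odd_iff] at h ⊢; omega⟩
  left_inv := by
    rintro ⟨⟨⟨a, b⟩, c, d⟩, h⟩
    apply Subtype.ext
    simp only [ofOddSum, toOddSum, coordSum, Int.even_iff, Prod.mk.injEq] at h ⊢
    omega
  right_inv := by
    rintro ⟨⟨⟨a, b⟩, c, d⟩, h⟩
    apply Subtype.ext
    simp only [ofOddSum, toOddSum, coordSum, Int.odd_iff, Prod.mk.injEq] at h ⊢
    omega

theorem sqNorm_toOddSum {p : ℤ⁴} (hp : Even (coordSum p)) :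
    sqNorm (toOddSum p) = sqNorm p + coordSum p + 1 := by
  obtain ⟨⟨a, b⟩, c, d⟩ := p
  obtain ⟨m, hm⟩ := hp
  simp only [coordSum] at hm
  have hdiv : (a + b + c + d) / 2 = m := by omega
  obtain rfl : a = m + m - b - c - d := by omega
  simp only [toOddSum, sqNorm, coordSum]
  rw [hdiv]
  ring

theorem cpow_intCast_add_half_sq {q : ℂ} (hq : q ≠ 0) (n : ℤ) :
    q ^ (((n : ℂ) + 1 / 2) ^ 2) = q ^ (1 / 4 : ℂ) * q ^ (n ^ 2 + n) := by
  rw [← Complex.cpow_intCast, ← Complex.cpow_add _ _ hq]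
  push_cast
  ring_nf

theorem hasSum_thetaThree_pow_four {q : ℂ} (h0 : 0 < ‖q‖) (h1 : ‖q‖ < 1) :
    HasSum (fun p : ℤ⁴ => q ^ sqNorm p) (thetaThree q ^ 4) := by
  have hq : q ≠ 0 := norm_pos_iff.mp h0
  refine (hasSum_pow_four_of_summable_norm
    (summable_norm_zpow_of_abs_le h0 h1 1 abs_le_sq_add_one)).congr_fun fun p => ?_
  simp only [sqNorm, zpow_add₀ hq]
  ring

theorem hasSum_thetaFour_pow_four {q : ℂ} (h0 : 0 < ‖q‖) (h1 : ‖q‖ < 1) :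
    HasSum (fun p : ℤ⁴ => (-1) ^ coordSum p * q ^ sqNorm p) (thetaFour q ^ 4) := by
  have hq : q ≠ 0 := norm_pos_iff.mp h0
  have hsummable : Summable fun n : ℤ => ‖(-1 : ℂ) ^ n * q ^ (n ^ 2)‖ := by
    simpa only [norm_mul, norm_zpow, norm_neg, norm_one, one_zpow, one_mul]
      using summable_norm_zpow_of_abs_le h0 h1 1 abs_le_sq_add_one
  refine (hasSum_pow_four_of_summable_norm hsummable).congr_fun fun p => ?_
  simp only [sqNorm, coordSum, zpow_add₀ hq, zpow_add₀ (by norm_num : (-1 : ℂ) ≠ 0)]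
  ring

theorem hasSum_thetaTwo_pow_four {q : ℂ} (h0 : 0 < ‖q‖) (h1 : ‖q‖ < 1) :
    HasSum (fun p : ℤ⁴ => q ^ (sqNorm p + coordSum p + 1)) (thetaTwo q ^ 4) := by
  have hq : q ≠ 0 := norm_pos_iff.mp h0
  have htheta : thetaTwo q = q ^ (1 / 4 : ℂ) * ∑' n : ℤ, q ^ (n ^ 2 + n) := by
    simp only [thetaTwo, cpow_intCast_add_half_sq hq, tsum_mul_left]
  rw [htheta, mul_pow, show (q ^ (1 / 4 : ℂ)) ^ 4 = q by simp]
  refine ((hasSum_pow_four_of_summable_norm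
    (summable_norm_zpow_of_abs_le h0 h1 1 abs_le_sq_add_self_add_one)).mul_left q).congr_fun
    fun p => ?_
  simp only [sqNorm, coordSum, zpow_add₀ hq, zpow_one]
  ring

/-- Jacobi's identity `θ₃(0,q)⁴ = θ₂(0,q)⁴ + θ₄(0,q)⁴`. -/
theorem jacobi_theta_identity (q : ℂ) (h0 : 0 < ‖q‖)
    (h1 : ‖q‖ < 1) :
    thetaThree q ^ 4 = thetaTwo q ^ 4 + thetaFour q ^ 4 := by
  have h3 := hasSum_thetaThree_pow_four h0 h1
  have h4 := hasSum_thetaFour_pow_four h0 h1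
  have h2 := hasSum_thetaTwo_pow_four h0 h1
  have hdiff : thetaThree q ^ 4 - thetaFour q ^ 4 =
      2 * ∑' z : {z : ℤ⁴ // Odd (coordSum z)}, q ^ sqNorm (z : ℤ⁴) := by
    rw [← h3.tsum_eq, ← h4.tsum_eq, tsum_sub_tsum_neg_one_zpow_mul h3.summable h4.summable]
  have htwo : thetaTwo q ^ 4 =
      2 * ∑' z : {z : ℤ⁴ // Odd (coordSum z)}, q ^ sqNorm (z : ℤ⁴) := by
    rw [← h2.tsum_eq, tsum_eq_two_mul_tsum_subtype_of_equiv h2.summable reflectLast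
      even_coordSum_iff_not_even_reflectLast fun p => by rw [sqNorm_add_coordSum_reflectLast],
      ← evenSumEquivOddSum.tsum_eq]
    congr 2 with ⟨p, hp⟩
    exact congrArg _ (sqNorm_toOddSum hp).symm
  linear_combination hdiff - htwo
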